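/- Let f(x_1,...,x_k) be a skew-symmetric polynomial (f changes sign under transposing any two of its arguments). If two of the substituted variables coincide, x_i = x_j with i ≠ j, then the hyperpfaffian Pf(f(x_S))_{S ∈ binom([n],k)} of order n vanishes. Consequently the Vandermonde product Π_{1≤i<j≤n}(x_j − x_i) divides the polynomial Pf(f(x_S)). -/

import Mathlib

open Finset Equiv MvPolynomial

open scoped Classical

noncomputable section

/-- The position of the `j`-th element of the `i`-th block. -/
def bpos (m k : ℕ) (i : Fin m) (j : Fin k) : Fin (m * k) :=
  ⟨k * (i : ℕ) + (j : ℕ), by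
    have hi := i.isLt
    have hj := j.isLt
    calc k * (i : ℕ) + (j : ℕ) < k * (i : ℕ) + k := by omega
      _ = k * ((i : ℕ) + 1) := by ring
      _ ≤ k * m := Nat.mul_le_mul_left k hi
      _ = m * k := Nat.mul_comm k m⟩

/-- Each block of the (oriented) partition is listed in increasing order. -/
def IsBlockMono (m k : ℕ) (π : Equiv.Perm (Fin (m * k))) : Prop :=
  ∀ i : Fin m, StrictMono fun j : Fin k => π (bpos m k i j)

/-- The blocks are listed in increasing order of their first elements. -/
def IsLeadMono (m k : ℕ) (π : Equiv.Perm (Fin (m * k))) : Prop :=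
  ∀ (i i' : Fin m) (j : Fin k), i < i' →
    π (bpos m k i ⟨0, j.pos⟩) < π (bpos m k i' ⟨0, j.pos⟩)

/-- Canonical representative of a set partition of `[n]`, `n = m*k`, into `m` blocks of
size `k`: each block increasing and blocks ordered by their minima. -/
def IsPartRep (m k : ℕ) (π : Equiv.Perm (Fin (m * k))) : Prop :=
  IsBlockMono m k π ∧ IsLeadMono m k π

/-- A `k`-ary function is skew-symmetric. -/
def IsSkewFun {k : ℕ} {α R : Type*} [CommRing R] (f : (Fin k → α) → R) : Prop :=
  ∀ (σ : Equiv.Perm (Fin k)) (v : Fin k → α),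
    f (v ∘ σ) = (Equiv.Perm.sign σ : ℤ) • f v

/-- The hyperpfaffian of a skew-symmetric `k`-ary function on `[m*k]`:
the signed sum over all set partitions of `[m*k]` into `m` blocks of size `k`. -/
def hyperPf (m k : ℕ) {R : Type*} [CommRing R]
    (f : (Fin k → Fin (m * k)) → R) : R :=
  ∑ π ∈ Finset.univ.filter (IsPartRep m k),
    (Equiv.Perm.sign π : ℤ) • ∏ i : Fin m, f fun j => π (bpos m k i j)

/-- A polynomial in `k` variables is skew-symmetric. -/
def IsSkewPoly {k : ℕ} {R : Type*} [CommRing R] (f : MvPolynomial (Fin k) R) : Prop :=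
  ∀ σ : Equiv.Perm (Fin k),
    MvPolynomial.rename (⇑σ) f = (Equiv.Perm.sign σ : ℤ) • f

/-- The hyperpfaffian `Pf (f(x_S))` of the values of a polynomial `f` in `k` variables
at the variables indexed by the `k`-subsets `S` of `[m*k]`. -/
def hyperPfPoly (m k : ℕ) {R : Type*} [CommRing R]
    (f : MvPolynomial (Fin k) R) : MvPolynomial (Fin (m * k)) R :=
  ∑ π ∈ Finset.univ.filter (IsPartRep m k),
    (Equiv.Perm.sign π : ℤ) •
      ∏ i : Fin m, MvPolynomial.rename (fun j => π (bpos m k i j)) f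

/-- The Vandermonde product. -/
def vand (n : ℕ) (R : Type*) [CommRing R] : MvPolynomial (Fin n) R :=
  ∏ p ∈ Finset.univ.filter (fun p : Fin n × Fin n => p.1 < p.2),
    (MvPolynomial.X p.2 - MvPolynomial.X p.1)

/-- The coefficient of `f` at the monomial with exponent vector `r`. -/
def coeffOf {k : ℕ} {R : Type*} [CommRing R] (f : MvPolynomial (Fin k) R)
    (r : Fin k → ℕ) : R :=
  MvPolynomial.coeff (Finsupp.equivFunOnFinite.symm r) f

/-- Membership in `Γ_{n,k}`: a strictly increasing composition of `k/2*(n-1)`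
into `k` distinct nonnegative parts. -/
def InGamma (n k : ℕ) (r : Fin k → ℕ) : Prop :=
  StrictMono r ∧ ∑ j, r j = k / 2 * (n - 1)

/-- Canonical representative of an element `β` of `R_{n,k}`, encoded as a permutation `e` of
`Fin (m*k)` (identified with `{0,…,n-1}`): the blocks of `e` are the compositions of `β`,
each block is increasing and sums to `k/2*(n-1)`, and the blocks are ordered canonically. -/
def IsWeightRep (m k : ℕ) (e : Equiv.Perm (Fin (m * k))) : Prop :=
  IsPartRep m k e ∧
    ∀ i : Fin m, ∑ j : Fin k, ((e (bpos m k i j)) : ℕ) = k / 2 * (m * k - 1)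

/-- The weight of the element `x` of `[m*k]` in the weighted oriented partition with
oriented partition (representative) `π` and weight vectors `w`. -/
def wtOf (m k : ℕ) (π : Equiv.Perm (Fin (m * k))) (w : Fin m → Fin k → ℕ) :
    Fin (m * k) → ℕ := fun x =>
  w ⟨((π.symm x : Fin (m*k)) : ℕ) / k, Nat.div_lt_of_lt_mul (lt_of_lt_of_le (π.symm x).isLt (le_of_eq (Nat.mul_comm m k)))⟩
    ⟨((π.symm x : Fin (m*k)) : ℕ) % k, Nat.mod_lt _ (by
      have ht := (π.symm x).isLt
      have hk : k ≠ 0 := by rintro rfl; omega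
      omega)⟩

/-!
Write `P` for the hyperpfaffian. Permutations `σ` of `[n]` that move whole blocks and permute
inside each block form a group `H`, and every left coset `σH` contains exactly one partition
representative (sort each block, then sort the blocks by their minima). Since `f` is skew and `k`
is even, the signed term `sign σ • ∏ᵢ f(x_{σ(block i)})` is constant on cosets, so `|H| • P` is
the sum of these terms over all of `S_n`, which is visibly alternating. Hence `P` is alternating
in characteristic `0`; substituting `x_j := x_i` in `P = -P∘(i j)` gives `0`. Each `x_j - x_i`
then divides `P`, and the factors can be split off one at a time because a factor does not vanish
on the other diagonals.
-/

section Blocks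

variable {m k : ℕ}

lemma finProdFinEquiv_eq_bpos (i : Fin m) (j : Fin k) :
    finProdFinEquiv (i, j) = bpos m k i j :=
  Fin.ext (Nat.add_comm _ _)

lemma bpos_inj {i i' : Fin m} {j j' : Fin k} :
    bpos m k i j = bpos m k i' j' ↔ i = i' ∧ j = j' := by
  rw [← finProdFinEquiv_eq_bpos, ← finProdFinEquiv_eq_bpos, Equiv.apply_eq_iff_eq,
    Prod.mk.injEq]

def block (σ : Perm (Fin (m * k))) (i : Fin m) : Fin k → Fin (m * k) :=
  fun j => σ (bpos m k i j)

lemma block_injective (σ : Perm (Fin (m * k))) (i : Fin m) : Function.Injective (block σ i) :=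
  fun _ _ h => (bpos_inj.1 (σ.injective h)).2

/-- Permutes the elements inside block `i` by `g i` and then moves the block to position `s i`. -/
def blockPerm (g : Fin m → Perm (Fin k)) (s : Perm (Fin m)) : Perm (Fin (m * k)) :=
  finProdFinEquiv.permCongr (Equiv.prodShear s g)

lemma blockPerm_bpos (g : Fin m → Perm (Fin k)) (s : Perm (Fin m)) (i : Fin m) (j : Fin k) :
    blockPerm g s (bpos m k i j) = bpos m k (s i) (g i j) := by
  simp [blockPerm, Equiv.permCongr_apply, ← finProdFinEquiv_eq_bpos]

lemma block_mul_blockPerm (σ : Perm (Fin (m * k))) (g : Fin m → Perm (Fin k))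
    (s : Perm (Fin m)) (i : Fin m) :
    block (σ * blockPerm g s) i = block σ (s i) ∘ g i := by
  funext j
  simp [block, blockPerm_bpos]

/-- Moving whole blocks of even size is an even permutation. -/
lemma sign_blockPerm (hk : Even k) (g : Fin m → Perm (Fin k)) (s : Perm (Fin m)) :
    Perm.sign (blockPerm g s) = ∏ i, Perm.sign (g i) := by
  have hshear : (Equiv.prodShear s g : Perm (Fin m × Fin k)) =
      Equiv.prodCongrLeft (fun _ => s) * Equiv.prodCongrRight g := by
    ext ⟨i, j⟩ <;> rfl
  rw [blockPerm, Perm.sign_permCongr, hshear, map_mul, Perm.sign_prodCongrLeft,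
    Perm.sign_prodCongrRight, Finset.prod_const, Finset.card_univ, Fintype.card_fin,
    Int.units_pow_eq_pow_mod_two, Nat.even_iff.mp hk, pow_zero, one_mul]

end Blocks

section Sorting

variable {n : ℕ} {α : Type*} [LinearOrder α]

lemma eq_sort_iff_strictMono {f : Fin n → α} (hf : Function.Injective f) (σ : Perm (Fin n)) :
    σ = Tuple.sort f ↔ StrictMono (f ∘ σ) := by
  rw [Tuple.eq_sort_iff]
  refine ⟨fun h => h.1.strictMono_of_injective (hf.comp σ.injective),
    fun h => ⟨h.monotone, fun i j hij hfij => ?_⟩⟩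
  exact absurd (σ.injective (hf hfij)) hij.ne

end Sorting

section Representatives

variable {m k : ℕ}

lemma isLeadMono_iff (hk0 : 0 < k) (π : Perm (Fin (m * k))) :
    IsLeadMono m k π ↔ StrictMono fun i => π (bpos m k i ⟨0, hk0⟩) :=
  ⟨fun h _ _ hii' => h _ _ ⟨0, hk0⟩ hii', fun h _ _ _ hii' => h hii'⟩

lemma isBlockMono_mul_blockPerm_iff (σ : Perm (Fin (m * k))) (g : Fin m → Perm (Fin k))
    (s : Perm (Fin m)) :
    IsBlockMono m k (σ * blockPerm g s) ↔ ∀ i, g i = Tuple.sort (block σ (s i)) := by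
  refine forall_congr' fun i => ?_
  rw [eq_sort_iff_strictMono (block_injective σ (s i)), ← block_mul_blockPerm]
  rfl

def blockMin (hk0 : 0 < k) (σ : Perm (Fin (m * k))) (i : Fin m) : Fin (m * k) :=
  block σ i (Tuple.sort (block σ i) ⟨0, hk0⟩)

lemma blockMin_injective (hk0 : 0 < k) (σ : Perm (Fin (m * k))) :
    Function.Injective (blockMin hk0 σ) :=
  fun _ _ h => (bpos_inj.1 (σ.injective h)).1

lemma isPartRep_mul_blockPerm_iff (hk0 : 0 < k) (σ : Perm (Fin (m * k)))
    (g : Fin m → Perm (Fin k)) (s : Perm (Fin m)) :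
    IsPartRep m k (σ * blockPerm g s) ↔
      s = Tuple.sort (blockMin hk0 σ) ∧ ∀ i, g i = Tuple.sort (block σ (s i)) := by
  rw [IsPartRep, isBlockMono_mul_blockPerm_iff, isLeadMono_iff hk0, and_comm]
  refine and_congr_left fun hg => ?_
  have hlead : (fun i => (σ * blockPerm g s) (bpos m k i ⟨0, hk0⟩)) = blockMin hk0 σ ∘ s := by
    funext i
    rw [Perm.mul_apply, blockPerm_bpos, hg]
    rfl
  rw [hlead, eq_sort_iff_strictMono (blockMin_injective hk0 σ)]

end Representatives

section Alternating

variable {m k : ℕ} {R : Type*} [CommRing R] {f : MvPolynomial (Fin k) R}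

def hyperPfTerm (m k : ℕ) (f : MvPolynomial (Fin k) R) (σ : Perm (Fin (m * k))) :
    MvPolynomial (Fin (m * k)) R :=
  (Perm.sign σ : ℤ) • ∏ i, rename (block σ i) f

lemma hyperPfPoly_eq_sum_hyperPfTerm :
    hyperPfPoly m k f = ∑ π ∈ univ.filter (IsPartRep m k), hyperPfTerm m k f π :=
  rfl

lemma hyperPfTerm_mul_blockPerm (hk : Even k) (hskew : IsSkewPoly f) (σ : Perm (Fin (m * k)))
    (g : Fin m → Perm (Fin k)) (s : Perm (Fin m)) :
    hyperPfTerm m k f (σ * blockPerm g s) = hyperPfTerm m k f σ := by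
  have hfactor : ∀ i, rename (block (σ * blockPerm g s) i) f =
      (Perm.sign (g i) : ℤ) • rename (block σ (s i)) f := fun i => by
    rw [block_mul_blockPerm, ← rename_rename, hskew, map_zsmul]
  rw [hyperPfTerm, hyperPfTerm, Finset.prod_congr rfl fun i _ => hfactor i, Finset.prod_smul,
    Equiv.prod_comp s fun i => rename (block σ i) f, smul_smul, map_mul, sign_blockPerm hk,
    ← Units.coe_prod, ← Units.val_mul, mul_assoc, Int.units_mul_self, mul_one]

lemma rename_hyperPfTerm (τ σ : Perm (Fin (m * k))) :
    rename τ (hyperPfTerm m k f σ) = (Perm.sign τ : ℤ) • hyperPfTerm m k f (τ * σ) := by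
  rw [hyperPfTerm, hyperPfTerm, map_zsmul, map_prod, smul_smul, map_mul, Units.val_mul,
    ← mul_assoc, Int.units_coe_mul_self, one_mul]
  simp only [rename_rename]
  rfl

lemma sum_hyperPfTerm (hk : Even k) (hk0 : 0 < k) (hskew : IsSkewPoly f) :
    ∑ σ, hyperPfTerm m k f σ =
      Fintype.card ((Fin m → Perm (Fin k)) × Perm (Fin m)) • hyperPfPoly m k f := by
  have hunique : ∀ σ : Perm (Fin (m * k)), ∃ q : (Fin m → Perm (Fin k)) × Perm (Fin m),
      ∀ p, IsPartRep m k (σ * blockPerm p.1 p.2) ↔ p = q := fun σ =>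
    ⟨(fun i => Tuple.sort (block σ (Tuple.sort (blockMin hk0 σ) i)),
      Tuple.sort (blockMin hk0 σ)), fun ⟨g, s⟩ => by
        rw [isPartRep_mul_blockPerm_iff hk0, Prod.mk.injEq, funext_iff]
        constructor
        · rintro ⟨rfl, hg⟩; exact ⟨hg, rfl⟩
        · rintro ⟨hg, rfl⟩; exact ⟨rfl, hg⟩⟩
  calc ∑ σ, hyperPfTerm m k f σ
      = ∑ σ, ∑ p : (Fin m → Perm (Fin k)) × Perm (Fin m),
          if IsPartRep m k (σ * blockPerm p.1 p.2) then hyperPfTerm m k f σ else 0 := by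
        refine Finset.sum_congr rfl fun σ _ => ?_
        obtain ⟨q, hq⟩ := hunique σ
        simp only [hq, Fintype.sum_ite_eq']
    _ = ∑ p : (Fin m → Perm (Fin k)) × Perm (Fin m), ∑ σ,
          if IsPartRep m k (σ * blockPerm p.1 p.2)
            then hyperPfTerm m k f (σ * blockPerm p.1 p.2) else 0 := by
        rw [Finset.sum_comm]
        simp only [hyperPfTerm_mul_blockPerm hk hskew]
    _ = ∑ _p : (Fin m → Perm (Fin k)) × Perm (Fin m), ∑ π,
          if IsPartRep m k π then hyperPfTerm m k f π else 0 := by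
        refine Finset.sum_congr rfl fun p _ => ?_
        exact Fintype.sum_equiv (Equiv.mulRight (blockPerm p.1 p.2)) _ _ fun _ => rfl
    _ = _ := by
        rw [Finset.sum_const, Finset.card_univ, ← Finset.sum_filter,
          hyperPfPoly_eq_sum_hyperPfTerm]

lemma rename_hyperPfPoly [IsDomain R] [CharZero R] (hk : Even k) (hk0 : 0 < k)
    (hskew : IsSkewPoly f) (τ : Perm (Fin (m * k))) :
    rename τ (hyperPfPoly m k f) = (Perm.sign τ : ℤ) • hyperPfPoly m k f := by
  apply nsmul_right_injective (Fintype.card_ne_zero (α := (Fin m → Perm (Fin k)) × Perm (Fin m)))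
  simp only [← map_nsmul, smul_comm _ (Perm.sign τ : ℤ), ← sum_hyperPfTerm hk hk0 hskew,
    map_sum, rename_hyperPfTerm, ← Finset.smul_sum]
  exact congrArg _ (Equiv.sum_comp (Equiv.mulLeft τ) _)

end Alternating

section Diagonals

variable {ι R : Type*} [CommRing R] [DecidableEq ι]

lemma rename_update_eq_zero_of_rename_swap [IsDomain R] [CharZero R]
    {P : MvPolynomial ι R} {i j : ι} (hij : i ≠ j) (hP : rename (swap i j) P = -P) :
    rename (Function.update id j i) P = 0 := by
  have hcomp : Function.update id j i ∘ swap i j = Function.update id j i := by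
    funext x
    by_cases hxi : x = i
    · simp [hxi, Function.update_of_ne hij]
    by_cases hxj : x = j
    · simp [hxj, hij]
    · simp [swap_apply_of_ne_of_ne hxi hxj]
  have h := congrArg (rename (Function.update id j i)) hP
  rwa [rename_rename, hcomp, map_neg, CharZero.eq_neg_self_iff] at h

lemma X_sub_X_dvd_sub_rename_update (i j : ι) (P : MvPolynomial ι R) :
    X j - X i ∣ P - rename (Function.update id j i) P := by
  set I := Ideal.span {(X j - X i : MvPolynomial ι R)}
  have hmk : Ideal.Quotient.mkₐ R I = (Ideal.Quotient.mkₐ R I).comp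
      (rename (Function.update id j i)) := by
    refine algHom_ext fun t => ?_
    by_cases htj : t = j
    · rw [htj, AlgHom.comp_apply, rename_X, Function.update_self, Ideal.Quotient.mkₐ_eq_mk,
        Ideal.Quotient.eq]
      exact Ideal.mem_span_singleton_self _
    · rw [AlgHom.comp_apply, rename_X, Function.update_of_ne htj, id]
  rw [← Ideal.mem_span_singleton, ← Ideal.Quotient.eq]
  exact DFunLike.congr_fun hmk P

end Diagonals

section Vandermonde

variable {ι R : Type*} [CommRing R] [DecidableEq ι] [LinearOrder ι]

lemma rename_update_X_sub_X_ne_zero [Nontrivial R] {a p : ι × ι} (ha : a.1 < a.2)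
    (hp : p.1 < p.2) (hap : a ≠ p) :
    rename (Function.update id p.2 p.1) (X a.2 - X a.1 : MvPolynomial ι R) ≠ 0 := by
  rw [map_sub, rename_X, rename_X, sub_ne_zero, Ne, X_inj]
  obtain ⟨a1, a2⟩ := a
  obtain ⟨p1, p2⟩ := p
  simp only [Function.update_apply, id, ne_eq, Prod.mk.injEq] at *
  split_ifs <;> grind

lemma prod_X_sub_X_dvd_of_rename_update_eq_zero [IsDomain R] (S : Finset (ι × ι))
    (hS : ∀ p ∈ S, p.1 < p.2) {P : MvPolynomial ι R}
    (hP : ∀ p ∈ S, rename (Function.update id p.2 p.1) P = 0) :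
    ∏ p ∈ S, (X p.2 - X p.1) ∣ P := by
  induction S using Finset.induction_on generalizing P with
  | empty => exact one_dvd P
  | insert a S haS ih =>
    obtain ⟨Q, rfl⟩ : X a.2 - X a.1 ∣ P := by
      simpa [hP a (mem_insert_self a S)] using X_sub_X_dvd_sub_rename_update a.1 a.2 P
    rw [prod_insert haS]
    refine mul_dvd_mul_left _ (ih (fun p hp => hS p (mem_insert_of_mem hp)) fun p hp => ?_)
    have hp' := hP p (mem_insert_of_mem hp)
    rw [map_mul, mul_eq_zero] at hp'
    exact hp'.resolve_left (rename_update_X_sub_X_ne_zero (hS a (mem_insert_self a S))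
      (hS p (mem_insert_of_mem hp)) (ne_of_mem_of_not_mem hp haS).symm)

end Vandermonde

lemma vand_dvd_of_rename_update_eq_zero {n : ℕ} {R : Type*} [CommRing R] [IsDomain R]
    {P : MvPolynomial (Fin n) R}
    (hP : ∀ i j : Fin n, i ≠ j → rename (Function.update id j i) P = 0) : vand n R ∣ P :=
  prod_X_sub_X_dvd_of_rename_update_eq_zero _ (fun _ hp => (mem_filter.1 hp).2)
    fun _ hp => hP _ _ (mem_filter.1 hp).2.ne

end

theorem stmt15 (m k : ℕ) (hk : Even k) (R : Type*) [CommRing R] [IsDomain R]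
    [CharZero R] (f : MvPolynomial (Fin k) R) (hskew : IsSkewPoly f) :
    (∀ i j : Fin (m * k), i ≠ j →
      MvPolynomial.rename (Function.update id j i) (hyperPfPoly m k f) = 0) ∧
    vand (m * k) R ∣ hyperPfPoly m k f := by
  have hdiag : ∀ i j : Fin (m * k), i ≠ j →
      rename (Function.update id j i) (hyperPfPoly m k f) = 0 := fun i j hij => by
    have hk0 : 0 < k := Nat.pos_of_mul_pos_left i.pos
    refine rename_update_eq_zero_of_rename_swap hij ?_
    rw [rename_hyperPfPoly hk hk0 hskew, Perm.sign_swap hij, Units.val_neg, Units.val_one,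
      neg_one_zsmul]
  exact ⟨hdiag, vand_dvd_of_rename_update_eq_zero hdiag⟩
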